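/- arXiv:2211.15945 — 3 statements merged into one kernel-verified Lean document; each statement's English description precedes it below -/
import Mathlib

section
/- Let S and T be strings with 2|T|/3 ≤ |S| ≤ |T|, and let k_1 < k_2 < ⋯ < k_d be all positions at which S occurs in T (i.e., T[k_j .. k_j+|S|−1] = S for each j, and these are all such positions). Then k_1, k_2, …, k_d form an arithmetic progression (k_{j+1} − k_j is the same for all 1 ≤ j < d). Moreover, if d ≥ 2, then per(S) = k_2 − k_1. -/
/-!
Two occurrences of `S` at distance `g` make `g` a period of `S`; since `|T| ≤ 3|S|/2`, any two
consecutive occurrences satisfy `2g ≤ |S|`. If the minimal period `p` were smaller than `g`, the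
weak Fine–Wilf step makes `g - p` a period as well, and these two periods let one read a third
copy of `S` at `k_j + p`, strictly between two consecutive occurrences. Hence every gap is `per(S)`.
-/

/-- A string of length `n` is modeled as a function `S : ℕ → α`, read at the
1-indexed positions `1, …, n`.  A positive integer `p ≤ n` is a *period* of `S`
if `S[i] = S[i+p]` holds for all `1 ≤ i ≤ n - p`. -/
def IsPeriod {α : Type*} (S : ℕ → α) (n p : ℕ) : Prop :=
  1 ≤ p ∧ p ≤ n ∧ ∀ i, 1 ≤ i → i + p ≤ n → S i = S (i + p)

/-- `per(S)`: the minimal period of the length-`n` string `S`. -/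
noncomputable def minPer {α : Type*} (S : ℕ → α) (n : ℕ) : ℕ :=
  sInf {p | IsPeriod S n p}

/-- The string `S` of length `m` occurs in the string `T` of length `n` at
(1-indexed) position `k`, i.e. `T[k .. k+m-1] = S`. -/
def OccursAt {α : Type*} (S : ℕ → α) (m : ℕ) (T : ℕ → α) (n k : ℕ) : Prop :=
  1 ≤ k ∧ k + m ≤ n + 1 ∧ ∀ t, 1 ≤ t → t ≤ m → T (k + t - 1) = S t

section Periods

variable {α : Type*} {S : ℕ → α} {m p q : ℕ}

theorem IsPeriod.sub (hp : IsPeriod S m p) (hq : IsPeriod S m q) (hpq : p < q)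
    (hsum : p + q ≤ m) : IsPeriod S m (q - p) := by
  obtain ⟨-, -, hpS⟩ := hp
  obtain ⟨-, -, hqS⟩ := hq
  refine ⟨by omega, by omega, fun i hi hle => ?_⟩
  by_cases h : i + q ≤ m
  · rw [hqS i hi h, hpS (i + (q - p)) (by omega) (by omega),
      show i + (q - p) + p = i + q by omega]
  · have back := hpS (i - p) (by omega) (by omega)
    have forth := hqS (i - p) (by omega) (by omega)
    rw [show i - p + p = i by omega] at back
    rw [show i - p + q = i + (q - p) by omega] at forth
    rw [← back, forth]

theorem isPeriod_self (hm : 1 ≤ m) : IsPeriod S m m :=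
  ⟨hm, le_rfl, fun _ _ _ => by omega⟩

theorem minPer_le (hq : IsPeriod S m q) : minPer S m ≤ q :=
  Nat.sInf_le hq

theorem isPeriod_minPer (hm : 1 ≤ m) : IsPeriod S m (minPer S m) :=
  Nat.sInf_mem (s := {p | IsPeriod S m p}) ⟨m, isPeriod_self hm⟩

end Periods

section Occurrences

variable {α : Type*} {S T : ℕ → α} {m n k g p : ℕ}

theorem OccursAt.isPeriod_of_add (h₁ : OccursAt S m T n k) (h₂ : OccursAt S m T n (k + g))
    (hg : 1 ≤ g) (hgm : g ≤ m) : IsPeriod S m g := by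
  refine ⟨hg, hgm, fun i hi hle => ?_⟩
  rw [← h₂.2.2 i hi (by omega), ← h₁.2.2 (i + g) (by omega) hle,
    show k + g + i - 1 = k + (i + g) - 1 by omega]

theorem OccursAt.add_of_isPeriod (h₁ : OccursAt S m T n k) (h₂ : OccursAt S m T n (k + g))
    (hp : IsPeriod S m p) (hpg : p < g) (hgm : p + g ≤ m) : OccursAt S m T n (k + p) := by
  have hgp : IsPeriod S m (g - p) :=
    hp.sub (h₁.isPeriod_of_add h₂ (by omega) (by omega)) hpg hgm
  have hk := h₁.1
  have hkg := h₂.2.1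
  refine ⟨by omega, by omega, fun t ht htm => ?_⟩
  by_cases hcase : t + p ≤ m
  · -- read inside the occurrence at `k`, using the period `p`
    rw [hp.2.2 t ht hcase, ← h₁.2.2 (t + p) (by omega) hcase,
      show k + p + t - 1 = k + (t + p) - 1 by omega]
  · -- read inside the occurrence at `k + g`, using the period `g - p`
    rw [show k + p + t - 1 = k + g + (t + p - g) - 1 by omega,
      h₂.2.2 (t + p - g) (by omega) (by omega), hgp.2.2 (t + p - g) (by omega) (by omega),
      show t + p - g + (g - p) = t by omega]

end Occurrences

theorem consecutive_occurrence_gap_eq_minPer {α : Type*} {S T : ℕ → α} {m n d : ℕ}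
    {k : ℕ → ℕ}
    (hlen : 2 * n ≤ 3 * m)
    (hmono : ∀ j, 1 ≤ j → j < d → k j < k (j + 1))
    (hocc : ∀ pos, OccursAt S m T n pos ↔ ∃ j, 1 ≤ j ∧ j ≤ d ∧ k j = pos)
    {j : ℕ} (hj : 1 ≤ j) (hjd : j < d) :
    k (j + 1) - k j = minPer S m := by
  have hk : StrictMonoOn k (Set.Icc 1 d) :=
    strictMonoOn_of_lt_add_one Set.ordConnected_Icc fun a _ ha ha' => hmono a ha.1 (by grind)
  have hlt := hmono j hj hjd
  obtain ⟨g, hg⟩ : ∃ g, k (j + 1) = k j + g := ⟨k (j + 1) - k j, by omega⟩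
  have h₁ : OccursAt S m T n (k j) := (hocc _).2 ⟨j, hj, hjd.le, rfl⟩
  have h₂ : OccursAt S m T n (k j + g) := hg ▸ (hocc _).2 ⟨j + 1, by omega, hjd, rfl⟩
  have hgm : 2 * g ≤ m := by have := h₁.1; have := h₂.2.1; omega
  have hper : IsPeriod S m (minPer S m) := isPeriod_minPer (by omega)
  have hle : minPer S m ≤ g := minPer_le (h₁.isPeriod_of_add h₂ (by omega) (by omega))
  rw [hg, Nat.add_sub_cancel_left]
  by_contra hne
  obtain ⟨i, hi, hid, hki⟩ :=
    (hocc _).1 (h₁.add_of_isPeriod h₂ hper (by omega) (by omega))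
  have hij : j < i := (hk.lt_iff_lt ⟨hj, hjd.le⟩ ⟨hi, hid⟩).1 (by have := hper.1; omega)
  have hij' : i < j + 1 :=
    (hk.lt_iff_lt (a := i) (b := j + 1) ⟨hi, hid⟩ ⟨by omega, hjd⟩).1 (by omega)
  omega

theorem occurrences_form_arithmetic_progression_general {α : Type*} (S T : ℕ → α) (m n d : ℕ)
    (hlen : 2 * n ≤ 3 * m)
    (k : ℕ → ℕ)
    (hmono : ∀ j, 1 ≤ j → j < d → k j < k (j + 1))
    (hocc : ∀ pos, OccursAt S m T n pos ↔ ∃ j, 1 ≤ j ∧ j ≤ d ∧ k j = pos) :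
    (∀ j₁ j₂, 1 ≤ j₁ → j₁ < d → 1 ≤ j₂ → j₂ < d →
        k (j₁ + 1) - k j₁ = k (j₂ + 1) - k j₂) ∧
      (2 ≤ d → minPer S m = k 2 - k 1) := by
  have gap {j : ℕ} (hj : 1 ≤ j) (hjd : j < d) : k (j + 1) - k j = minPer S m :=
    consecutive_occurrence_gap_eq_minPer hlen hmono hocc hj hjd
  exact ⟨fun j₁ j₂ h₁ h₁d h₂ h₂d => by rw [gap h₁ h₁d, gap h₂ h₂d],
    fun hd => (gap le_rfl hd).symm⟩

/-- **Structure of substring occurrences.** Let `S`, `T` be strings with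
`2|T|/3 ≤ |S| ≤ |T|`, and let `k 1 < k 2 < ⋯ < k d` be all the positions at which
`S` occurs in `T`.  Then the `k j` form an arithmetic progression; moreover, if
`d ≥ 2`, then `per(S) = k 2 - k 1`. -/
theorem occurrences_form_arithmetic_progression {α : Type*} (S T : ℕ → α) (m n d : ℕ)
    (hm : 1 ≤ m) (hlen : 2 * n ≤ 3 * m) (hmn : m ≤ n)
    (k : ℕ → ℕ)
    (hmono : ∀ j, 1 ≤ j → j < d → k j < k (j + 1))
    (hocc : ∀ pos, OccursAt S m T n pos ↔ ∃ j, 1 ≤ j ∧ j ≤ d ∧ k j = pos) :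
    (∀ j₁ j₂, 1 ≤ j₁ → j₁ < d → 1 ≤ j₂ → j₂ < d →
        k (j₁ + 1) - k j₁ = k (j₂ + 1) - k j₂) ∧
      (2 ≤ d → minPer S m = k 2 - k 1) :=
  occurrences_form_arithmetic_progression_general S T m n d hlen k hmono hocc
end

section
/- Let T be a string of length n, let τ be a positive integer, and let Q = {i ∈ [1 .. n−τ+1] : per(T[i .. i+τ−1]) ≤ τ/3}. Suppose an interval [l .. r] ⊆ [1 .. n−τ+1] has length r − l + 1 ≤ τ/3. Then [l .. r] ∩ Q is either empty or an interval of consecutive integers, namely: if j and k are respectively the minimum and maximum elements of [l .. r] ∩ Q, then [j .. k] ⊆ Q. -/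
def HasPeriodOn {α : Type*} (T : ℕ → α) (a b p : ℕ) : Prop :=
  ∀ u, a ≤ u → u + p ≤ b → T u = T (u + p)

namespace HasPeriodOn

variable {α : Type*} {T : ℕ → α} {a b c d p q : ℕ}

theorem mono (h : HasPeriodOn T a b p) (ha : a ≤ c) (hb : d ≤ b) : HasPeriodOn T c d p :=
  fun u hu hud => h u (ha.trans hu) (hud.trans hb)

theorem union (h₁ : HasPeriodOn T a b p) (h₂ : HasPeriodOn T c d p) (hcb : c + p ≤ b + 1) :
    HasPeriodOn T a d p := by
  intro u hau hud
  by_cases hub : u + p ≤ b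
  · exact h₁ u hau hub
  · exact h₂ u (by omega) hud

theorem extend_of_prefix (hq : HasPeriodOn T a b q) (hq0 : 0 < q) (hp : HasPeriodOn T a c p)
    (hpq : a + p + q ≤ c + 1) : HasPeriodOn T a b p := by
  intro u
  induction u using Nat.strong_induction_on with
  | _ u ih =>
    intro hau hub
    by_cases huc : u + p ≤ c
    · exact hp u hau huc
    · obtain ⟨v, rfl⟩ : ∃ v, u = v + q := ⟨u - q, by omega⟩
      calc T (v + q) = T v := (hq v (by omega) (by omega)).symm
        _ = T (v + p) := ih v (by omega) (by omega) (by omega)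
        _ = T (v + q + p) := by rw [hq (v + p) (by omega) (by omega), Nat.add_right_comm]

end HasPeriodOn

section Window

variable {α : Type*}

theorem isPeriod_minPer_s3 (S : ℕ → α) {n : ℕ} (hn : 1 ≤ n) : IsPeriod S n (minPer S n) :=
  Nat.sInf_mem (s := {p | IsPeriod S n p}) ⟨n, hn, le_rfl, fun _ _ _ => by omega⟩

theorem isPeriod_window_iff (T : ℕ → α) {i τ p : ℕ} (hi : 1 ≤ i) :
    IsPeriod (fun t => T (i + t - 1)) τ p ↔
      1 ≤ p ∧ p ≤ τ ∧ HasPeriodOn T i (i + τ - 1) p := by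
  refine and_congr_right fun hp => and_congr_right fun _ =>
    ⟨fun h u hiu hup => ?_, fun h t ht htp => ?_⟩
  · have := h (u + 1 - i) (by omega) (by omega)
    dsimp only at this
    rwa [show i + (u + 1 - i) - 1 = u by omega,
      show i + (u + 1 - i + p) - 1 = u + p by omega] at this
  · have := h (i + t - 1) (by omega) (by omega)
    rwa [show i + t - 1 + p = i + (t + p) - 1 by omega] at this

end Window

theorem Q_intersection_is_interval_general {α : Type*} (T : ℕ → α) (n τ : ℕ)
    (Q : Set ℕ)
    (hQ : Q = {i | 1 ≤ i ∧ i + τ ≤ n + 1 ∧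
      minPer (fun t => T (i + t - 1)) τ ≤ τ / 3})
    (l r : ℕ)
    (hlen : r - l + 1 ≤ τ / 3) :
    ∀ j ∈ Q ∩ Set.Icc l r, ∀ k ∈ Q ∩ Set.Icc l r, ∀ x, j ≤ x → x ≤ k → x ∈ Q := by
  subst hQ
  rintro j ⟨⟨hj1, -, hjper⟩, hjl, -⟩ k ⟨⟨hk1, hkn, hkper⟩, -, hkr⟩ x hjx hxk
  have hτ : 1 ≤ τ := by omega
  obtain ⟨hp1, -, hpj⟩ :=
    (isPeriod_window_iff T hj1).1 (isPeriod_minPer_s3 (fun t => T (j + t - 1)) hτ)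
  obtain ⟨hq1, -, hqk⟩ :=
    (isPeriod_window_iff T hk1).1 (isPeriod_minPer_s3 (fun t => T (k + t - 1)) hτ)
  set p := minPer (fun t => T (j + t - 1)) τ
  have hpk : HasPeriodOn T k (k + τ - 1) p :=
    hqk.extend_of_prefix hq1 (hpj.mono (hjx.trans hxk) le_rfl) (by omega)
  have hpx : HasPeriodOn T x (x + τ - 1) p :=
    (hpj.union hpk (by omega)).mono hjx (by omega)
  refine ⟨by omega, by omega, (Nat.sInf_le ?_).trans hjper⟩
  exact (isPeriod_window_iff T (by omega)).2 ⟨hp1, by omega, hpx⟩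

/-- **Structure of the highly-periodic set `Q`.** If the interval `[l .. r] ⊆ [1 .. n-τ+1]`
has length `r - l + 1 ≤ τ/3`, then `[l .. r] ∩ Q` is either empty or an interval of
consecutive integers: any integer lying between two elements of `[l .. r] ∩ Q` is in `Q`. -/
theorem Q_intersection_is_interval {α : Type*} (T : ℕ → α) (n τ : ℕ) (hτ : 1 ≤ τ)
    (Q : Set ℕ)
    (hQ : Q = {i | 1 ≤ i ∧ i + τ ≤ n + 1 ∧
      minPer (fun t => T (i + t - 1)) τ ≤ τ / 3})
    (l r : ℕ) (hl : 1 ≤ l) (hlr : l ≤ r) (hr : r + τ ≤ n + 1)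
    (hlen : r - l + 1 ≤ τ / 3) :
    ∀ j ∈ Q ∩ Set.Icc l r, ∀ k ∈ Q ∩ Set.Icc l r, ∀ x, j ≤ x → x ≤ k → x ∈ Q :=
  Q_intersection_is_interval_general T n τ Q hQ l r hlen
end

section
/- Let P be a string of length m, let T be a string of length n, and let k ∈ [1 .. m] be a threshold. Suppose there exist a positive integer d ≥ 2k and a primitive string Q with |Q| ≤ m/(8d) and δ_H(P, Q^*) = d. Then the number of k-mismatch occurrences of P in T, i.e., |{i ∈ [1 .. n−m+1] : δ_H(T[i .. i+m−1], P) ≤ k}|, is at most 12·(n/m)·d. -/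
/-- A length-`ℓ` string `Q` is *primitive* if it cannot be written as `W^t`
for a string `W` and an integer `t > 1`, i.e. no proper divisor of `ℓ` is a period. -/
def Primitive {α : Type*} (Q : ℕ → α) (ℓ : ℕ) : Prop :=
  ∀ p, 1 ≤ p → p < ℓ → p ∣ ℓ → ¬ IsPeriod Q ℓ p

/-- `δ_H(S, Q^*)`: the Hamming distance between the length-`len` string `S` and the
prefix of the same length of the infinite periodic extension `Q^* = QQQ⋯` of the
length-`ℓ` string `Q`. -/
noncomputable def hammingToPer {α : Type*} (S : ℕ → α) (len : ℕ) (Q : ℕ → α) (ℓ : ℕ) : ℕ :=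
  Set.ncard {t | 1 ≤ t ∧ t ≤ len ∧ S t ≠ Q ((t - 1) % ℓ + 1)}
/-!
By primitivity of `Q`, the extension `Q^*` and its shift by any `p` that is not a multiple of
`ℓ = |Q|` disagree somewhere in every block of `ℓ` consecutive positions. Two occurrences whose
windows overlap in at least `4dℓ` positions must therefore read `Q^*` in the same phase: otherwise
the overlap holds `4d` letters of `T` each disagreeing with one of the two alignments, while each
window differs from `Q^*` in at most `d + k` positions.

Occurrences lying in a stretch of length `m - 4dℓ ≥ m/2` thus all align with one copy of `Q^*`,
which the text under them misses at most `2(d + k)` times. Each occurrence reproduces at least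
`d - k` of the `d` mismatches of `P` against `Q^*`, and each text mismatch is reproduced by at
most `d` occurrences, so a stretch holds at most `6d` occurrences, and `n` positions are covered by
at most `2n/m` stretches.
-/

open Finset Function
open scoped Classical

section Mismatches

variable {α : Type*}

noncomputable def mismatches (A B : ℕ → α) (m : ℕ) : Finset ℕ :=
  {t ∈ Icc 1 m | A t ≠ B t}

@[simp]
theorem mem_mismatches {A B : ℕ → α} {m t : ℕ} :
    t ∈ mismatches A B m ↔ (1 ≤ t ∧ t ≤ m) ∧ A t ≠ B t := by
  simp [mismatches]

theorem ncard_setOf_ne_eq_card_mismatches (A B : ℕ → α) (m : ℕ) :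
    Set.ncard {t | 1 ≤ t ∧ t ≤ m ∧ A t ≠ B t} = #(mismatches A B m) := by
  rw [← Set.ncard_coe_finset]
  congr 1
  ext t
  simp [and_assoc]

theorem card_mismatches_le_add (A B C : ℕ → α) (m : ℕ) :
    #(mismatches A C m) ≤ #(mismatches A B m) + #(mismatches B C m) := by
  refine (card_le_card fun t ht => ?_).trans (card_union_le _ _)
  rw [mem_mismatches] at ht
  by_cases hAB : A t = B t
  · exact mem_union_right _ (mem_mismatches.2 ⟨ht.1, hAB ▸ ht.2⟩)
  · exact mem_union_left _ (mem_mismatches.2 ⟨ht.1, hAB⟩)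

theorem card_mismatches_le_card_inter_add (A B C : ℕ → α) (m : ℕ) :
    #(mismatches B C m) ≤ #(mismatches B C m ∩ mismatches A C m) + #(mismatches A B m) := by
  refine (card_le_card fun t ht => ?_).trans (card_union_le _ _)
  rw [mem_mismatches] at ht
  by_cases hAC : A t = C t
  · exact mem_union_right _ (mem_mismatches.2 ⟨ht.1, hAC ▸ ht.2.symm⟩)
  · exact mem_union_left _
      (mem_inter.2 ⟨mem_mismatches.2 ht, mem_mismatches.2 ⟨ht.1, hAC⟩⟩)

end Mismatches

theorem card_le_mul_of_forall_close_card_le {S : Finset ℕ} {N h B : ℕ} (hh : 0 < h)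
    (hS : S ⊆ Icc 1 N)
    (hB : ∀ S' ⊆ S, (∀ i ∈ S', ∀ j ∈ S', i ≤ j → j < i + h) → #S' ≤ B) :
    #S ≤ B * ((N + h - 1) / h) := by
  rw [← card_range ((N + h - 1) / h)]
  refine card_le_mul_card_image_of_maps_to (f := fun i => (i - 1) / h) (fun i hi => ?_) B
    fun q _ => hB _ (filter_subset _ S) fun i hi j hj _ => ?_
  · have := mem_Icc.1 (hS hi)
    rw [mem_range, Nat.lt_iff_add_one_le, ← Nat.add_div_right _ hh]
    exact Nat.div_le_div_right (by omega)
  · have hblock : ∀ x ∈ {i ∈ S | (i - 1) / h = q}, h * q ≤ x - 1 ∧ x - 1 < h * q + h :=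
      fun x hx => by
        rw [← (mem_filter.1 hx).2]
        exact ⟨Nat.mul_div_le _ _, Nat.lt_mul_div_succ _ hh⟩
    have := (mem_Icc.1 (hS (mem_filter.1 hi).1)).1
    have := hblock i hi
    have := hblock j hj
    omega

theorem Function.Periodic.nat_mod {α : Type*} {f : ℕ → α} {a b : ℕ}
    (ha : Periodic f a) (hb : Periodic f b) : Periodic f (b % a) := fun x => by
  rw [← (ha.nat_mul (b / a)) (x + b % a), add_assoc, Nat.cast_id, Nat.mod_add_div', hb]

theorem Function.Periodic.nat_gcd {α : Type*} {f : ℕ → α} {a b : ℕ}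
    (ha : Periodic f a) (hb : Periodic f b) : Periodic f (Nat.gcd a b) := by
  induction a, b using Nat.gcd.induction with
  | H0 b => simpa using hb
  | H1 a b _ ih =>
    rw [Nat.gcd_rec]
    exact ih (ha.nat_mod hb) ha

section Strings

variable {α : Type*}

def window (T : ℕ → α) (i : ℕ) : ℕ → α := fun t => T (i + t - 1)

theorem window_add_sub (T : ℕ → α) {i j : ℕ} (hij : i ≤ j) (u : ℕ) :
    window T i (u + (j - i)) = window T j u := by
  simp only [window]
  congr 1
  omega

def periodicExt (Q : ℕ → α) (ℓ : ℕ) : ℕ → α := fun t => Q ((t - 1) % ℓ + 1)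

theorem hammingToPer_eq_card_mismatches (S : ℕ → α) (len : ℕ) (Q : ℕ → α) (ℓ : ℕ) :
    hammingToPer S len Q ℓ = #(mismatches S (periodicExt Q ℓ) len) :=
  ncard_setOf_ne_eq_card_mismatches S (periodicExt Q ℓ) len

noncomputable def kMismatchOccurrences (T P : ℕ → α) (m n k : ℕ) : Finset ℕ :=
  {i ∈ Icc 1 (n + 1 - m) | #(mismatches (window T i) P m) ≤ k}

theorem ncard_setOf_kMismatch_eq_card_kMismatchOccurrences (T P : ℕ → α) (m n k : ℕ) :
    Set.ncard {i | 1 ≤ i ∧ i + m ≤ n + 1 ∧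
        Set.ncard {t | 1 ≤ t ∧ t ≤ m ∧ T (i + t - 1) ≠ P t} ≤ k} =
      #(kMismatchOccurrences T P m n k) := by
  rw [← Set.ncard_coe_finset]
  congr 1
  ext i
  simp only [kMismatchOccurrences, coe_filter, mem_Icc, Set.mem_ofPred_eq,
    ← ncard_setOf_ne_eq_card_mismatches (window T i) P m, window]
  omega

theorem periodicExt_of_le (Q : ℕ → α) {ℓ t : ℕ} (h1 : 1 ≤ t) (hℓ : t ≤ ℓ) :
    periodicExt Q ℓ t = Q t := by
  simp only [periodicExt]
  rw [Nat.mod_eq_of_lt (by omega)]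
  congr 1
  omega

theorem periodicExt_add_of_dvd (Q : ℕ → α) {ℓ t o : ℕ} (ht : 1 ≤ t) (ho : ℓ ∣ o) :
    periodicExt Q ℓ (t + o) = periodicExt Q ℓ t := by
  obtain ⟨c, rfl⟩ := ho
  simp only [periodicExt]
  rw [show t + ℓ * c - 1 = t - 1 + ℓ * c by omega, Nat.add_mul_mod_self_left]

end Strings

theorem Primitive.exists_periodicExt_add_ne {α : Type*} {Q : ℕ → α} {ℓ p : ℕ}
    (hprim : Primitive Q ℓ) (hℓ : 0 < ℓ) (hp : ¬ ℓ ∣ p) :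
    ∃ v, 1 ≤ v ∧ v ≤ ℓ ∧ periodicExt Q ℓ (v + p) ≠ periodicExt Q ℓ v := by
  by_contra! h
  set f : ℕ → α := fun u => periodicExt Q ℓ (u + 1)
  have hfℓ : Periodic f ℓ := fun u => by
    simpa only [f, add_right_comm u ℓ 1] using periodicExt_add_of_dvd Q le_add_self dvd_rfl
  have hfp : Periodic f p := fun u => by
    calc f (u + p) = f (u % ℓ + p + (u / ℓ) * ℓ) := by
          rw [add_right_comm, Nat.mod_add_div']
      _ = f (u % ℓ) := by
          rw [← Nat.cast_id (u / ℓ), hfℓ.nat_mul]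
          simpa only [f, add_right_comm _ p 1] using
            h (u % ℓ + 1) le_add_self (Nat.mod_lt u hℓ)
      _ = f u := hfℓ.map_mod_nat u
  -- `p` and `ℓ` are periods of `Q^*`, hence so is `gcd p ℓ`, a proper divisor of `ℓ`
  set g := Nat.gcd p ℓ
  have hg : Periodic f g := hfp.nat_gcd hfℓ
  have hgℓ : g ≠ ℓ := fun hgℓ => hp (hgℓ ▸ Nat.gcd_dvd_left p ℓ)
  have hg0 : 0 < g := Nat.gcd_pos_of_pos_right p hℓ
  have hgle : g ≤ ℓ := Nat.le_of_dvd hℓ (Nat.gcd_dvd_right p ℓ)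
  refine hprim g hg0 (lt_of_le_of_ne hgle hgℓ) (Nat.gcd_dvd_right p ℓ)
    ⟨hg0, hgle, fun i hi hig => ?_⟩
  rw [← periodicExt_of_le Q (ℓ := ℓ) hi (by omega), ← periodicExt_of_le Q (by omega) hig]
  simpa only [f, Nat.sub_add_cancel hi, add_right_comm _ g 1] using (hg (i - 1)).symm

section Occurrences

variable {α : Type*} {T Q : ℕ → α} {m ℓ a b : ℕ}

theorem dvd_sub_of_card_mismatches_periodicExt_le (hprim : Primitive Q ℓ) (hℓ : 0 < ℓ)
    {i j c e : ℕ} (hij : i ≤ j) (hoverlap : j - i + c * ℓ ≤ m) (hce : 2 * e < c)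
    (hi : #(mismatches (window T i) (periodicExt Q ℓ) m) ≤ e)
    (hj : #(mismatches (window T j) (periodicExt Q ℓ) m) ≤ e) : ℓ ∣ j - i := by
  by_contra hp
  obtain ⟨v, hv1, hvℓ, hv⟩ := hprim.exists_periodicExt_add_ne hℓ hp
  set p := j - i
  set X := (range c).image fun s => v + s * ℓ
  have hX : #X = c := by
    rw [card_image_of_injective _ fun s s' hss' =>
      Nat.eq_of_mul_eq_mul_right hℓ (Nat.add_left_cancel hss'), card_range]
  have hXR : ∀ u ∈ X,
      1 ≤ u ∧ u + p ≤ m ∧ periodicExt Q ℓ (u + p) ≠ periodicExt Q ℓ u := by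
    simp only [X, mem_image, mem_range]
    rintro _ ⟨s, hs, rfl⟩
    have hsc : (s + 1) * ℓ ≤ c * ℓ := Nat.mul_le_mul_right ℓ hs
    refine ⟨by omega, by rw [add_mul] at hsc; omega, ?_⟩
    rwa [add_right_comm, periodicExt_add_of_dvd Q (by omega) (dvd_mul_left ℓ s),
      periodicExt_add_of_dvd Q hv1 (dvd_mul_left ℓ s)]
  -- the letter `T (j + u - 1)` cannot agree with `Q^*` in both phases
  have hsub : X ⊆ mismatches (window T j) (periodicExt Q ℓ) m ∪
      {u ∈ X | u + p ∈ mismatches (window T i) (periodicExt Q ℓ) m} := by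
    intro u hu
    obtain ⟨hu1, hup, hRu⟩ := hXR u hu
    by_cases hT : window T j u = periodicExt Q ℓ u
    · refine mem_union_right _ (mem_filter.2 ⟨hu, mem_mismatches.2 ⟨by omega, ?_⟩⟩)
      rw [window_add_sub T hij, hT]
      exact hRu.symm
    · exact mem_union_left _ (mem_mismatches.2 ⟨⟨hu1, by omega⟩, hT⟩)
  have hshift : #{u ∈ X | u + p ∈ mismatches (window T i) (periodicExt Q ℓ) m} ≤ e :=
    (card_le_card_of_injOn (· + p) (fun u hu => (mem_filter.1 hu).2)
      (add_left_injective p).injOn).trans hi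
  have := (card_le_card hsub).trans (card_union_le _ _)
  omega

theorem card_mismatches_window_periodicExt_le_add (hdvd : ℓ ∣ b - a) (hab : a ≤ b)
    (hba : b ≤ a + m) :
    #(mismatches (window T a) (periodicExt Q ℓ) (b - a + m)) ≤
      #(mismatches (window T a) (periodicExt Q ℓ) m) +
        #(mismatches (window T b) (periodicExt Q ℓ) m) := by
  have hsub : mismatches (window T a) (periodicExt Q ℓ) (b - a + m) ⊆
      mismatches (window T a) (periodicExt Q ℓ) m ∪
        (mismatches (window T b) (periodicExt Q ℓ) m).image (· + (b - a)) := by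
    intro u hu
    rw [mem_mismatches] at hu
    by_cases hum : u ≤ m
    · exact mem_union_left _ (mem_mismatches.2 ⟨⟨hu.1.1, hum⟩, hu.2⟩)
    · refine mem_union_right _
        (mem_image.2 ⟨u - (b - a), mem_mismatches.2 ⟨by omega, ?_⟩, by omega⟩)
      rw [← window_add_sub T hab, ← periodicExt_add_of_dvd Q (by omega) hdvd,
        Nat.sub_add_cancel (by omega)]
      exact hu.2
  calc _ ≤ _ := card_le_card hsub
    _ ≤ _ := card_union_le _ _
    _ ≤ _ := add_le_add_right card_image_le _

theorem card_mismatches_window_periodicExt_le {P : ℕ → α} {d k j : ℕ}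
    (hP : #(mismatches P (periodicExt Q ℓ) m) = d) (hocc : #(mismatches (window T j) P m) ≤ k) :
    #(mismatches (window T j) (periodicExt Q ℓ) m) ≤ d + k :=
  (card_mismatches_le_add _ P _ m).trans (by omega)

theorem card_mul_sub_le_of_dvd {P : ℕ → α} {d k : ℕ} {S : Finset ℕ}
    (hP : #(mismatches P (periodicExt Q ℓ) m) = d)
    (hocc : ∀ j ∈ S, #(mismatches (window T j) P m) ≤ k)
    (ha : a ∈ S) (hb : b ∈ S) (hS : ∀ j ∈ S, a ≤ j ∧ j ≤ b ∧ ℓ ∣ j - a)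
    (hba : b ≤ a + m) :
    #S * (d - k) ≤ 2 * (d + k) * d := by
  have hwin := fun j hj => card_mismatches_window_periodicExt_le (T := T) hP (hocc j hj)
  have hB : #(mismatches (window T a) (periodicExt Q ℓ) (b - a + m)) ≤ 2 * (d + k) := by
    have := card_mismatches_window_periodicExt_le_add (T := T) (Q := Q)
      (hS b hb).2.2 (hS b hb).1 hba
    have := hwin a ha
    have := hwin b hb
    omega
  -- each occurrence `j` reproduces at least `d - k` mismatches of `P` in the stretch, at
  -- offsets `u` with `u + a - j` a mismatch of `P`; each offset `u` arises from at most `d` of them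
  have hdouble := card_mul_le_card_mul (fun j u => u + a - j ∈ mismatches P (periodicExt Q ℓ) m)
    (s := S) (t := mismatches (window T a) (periodicExt Q ℓ) (b - a + m))
    (m := d - k) (n := d) ?_ ?_
  · exact hdouble.trans (Nat.mul_le_mul_right d hB)
  · intro j hj
    obtain ⟨haj, hjb, hdvd⟩ := hS j hj
    have hlow : d - k ≤ #(mismatches P (periodicExt Q ℓ) m ∩
        mismatches (window T j) (periodicExt Q ℓ) m) := by
      have := card_mismatches_le_card_inter_add (window T j) P (periodicExt Q ℓ) m
      have := hocc j hj
      omega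
    refine hlow.trans
      (card_le_card_of_injOn (· + (j - a)) (fun t ht => ?_) (add_left_injective _).injOn)
    obtain ⟨htM, htT⟩ := mem_inter.1 ht
    rw [mem_mismatches] at htT
    show t + (j - a) ∈ _
    refine mem_filter.2 ⟨mem_mismatches.2 ⟨by omega, ?_⟩, ?_⟩
    · rw [window_add_sub T haj, periodicExt_add_of_dvd Q htT.1.1 hdvd]
      exact htT.2
    · simpa [show t + (j - a) + a - j = t by omega] using htM
  · intro u _
    rw [← hP]
    refine card_le_card_of_injOn (fun j => u + a - j) (fun j hj => (mem_filter.1 hj).2)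
      fun j hj j' hj' hjj' => ?_
    have h1 := (mem_mismatches.1 (mem_filter.1 hj).2).1.1
    have h2 := (mem_mismatches.1 (mem_filter.1 hj').2).1.1
    simp only at hjj'
    omega

theorem card_le_six_mul_of_close {P : ℕ → α} {d k : ℕ} {S : Finset ℕ}
    (hprim : Primitive Q ℓ) (hℓ : 0 < ℓ) (hk : 1 ≤ k) (hd : 2 * k ≤ d)
    (hP : #(mismatches P (periodicExt Q ℓ) m) = d)
    (hocc : ∀ j ∈ S, #(mismatches (window T j) P m) ≤ k)
    (hclose : ∀ i ∈ S, ∀ j ∈ S, i ≤ j → j < i + (m - 4 * d * ℓ)) :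
    #S ≤ 6 * d := by
  rcases S.eq_empty_or_nonempty with rfl | hne
  · simp
  have ha := S.min'_mem hne
  have hb := S.max'_mem hne
  have hwin := fun j hj => card_mismatches_window_periodicExt_le (T := T) hP (hocc j hj)
  have hphase : ∀ j ∈ S, ℓ ∣ j - S.min' hne := fun j hj =>
    dvd_sub_of_card_mismatches_periodicExt_le hprim hℓ (c := 4 * d) (S.min'_le j hj)
      (by have := S.min'_le j hj; have := hclose _ ha j hj this; omega) (by omega)
      (hwin _ ha) (hwin j hj)
  have hcount := card_mul_sub_le_of_dvd hP hocc ha hb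
    (fun j hj => ⟨S.min'_le j hj, S.le_max' j hj, hphase j hj⟩)
    (by have := hclose _ ha _ hb (S.min'_le _ hb); omega)
  obtain ⟨e, rfl⟩ := Nat.exists_eq_add_of_le (by omega : k ≤ d)
  rw [Nat.add_sub_cancel_left] at hcount
  nlinarith

end Occurrences

theorem kmismatch_occurrences_bound_general {α : Type*} (P T : ℕ → α) (m n k d : ℕ)
    (hk : 1 ≤ k) (hd : 2 * k ≤ d)
    (Q : ℕ → α) (ℓ : ℕ) (hℓ : 1 ≤ ℓ) (hQlen : 8 * d * ℓ ≤ m)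
    (hprim : Primitive Q ℓ) (hdist : hammingToPer P m Q ℓ = d) :
    (Set.ncard {i | 1 ≤ i ∧ i + m ≤ n + 1 ∧
        Set.ncard {t | 1 ≤ t ∧ t ≤ m ∧ T (i + t - 1) ≠ P t} ≤ k} : ℚ)
      ≤ 12 * ((n : ℚ) / (m : ℚ)) * (d : ℚ) := by
  set h := m - 4 * d * ℓ
  have hh : 0 < h ∧ m ≤ 2 * h := by
    have : 0 < 4 * d * ℓ := Nat.mul_pos (by omega) hℓ
    have : 8 * d * ℓ = 2 * (4 * d * ℓ) := by ring
    omega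
  set occ := kMismatchOccurrences T P m n k
  have hcard : #occ ≤ 6 * d * ((n + 1 - m + h - 1) / h) :=
    card_le_mul_of_forall_close_card_le hh.1 (filter_subset _ _)
      fun S hS hclose => card_le_six_mul_of_close hprim hℓ hk hd
        ((hammingToPer_eq_card_mismatches P m Q ℓ).symm.trans hdist)
        (fun j hj => (mem_filter.1 (hS hj)).2) hclose
  have hblocks : (n + 1 - m + h - 1) / h * h ≤ n := by
    rcases Nat.eq_zero_or_pos (n + 1 - m) with hN | hN
    · simp [Nat.div_eq_of_lt (by omega : n + 1 - m + h - 1 < h)]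
    · have := Nat.div_mul_le_self (n + 1 - m + h - 1) h
      omega
  have hm : (0 : ℚ) < m := by exact_mod_cast (by omega : 0 < m)
  have hcard_mul : #occ * m ≤ 12 * n * d := by nlinarith
  rw [ncard_setOf_kMismatch_eq_card_kMismatchOccurrences, mul_div_assoc', div_mul_eq_mul_div,
    le_div_iff₀ hm]
  exact_mod_cast hcard_mul

/-- **Bound on the number of `k`-mismatch occurrences** (Corollary 3.5 of CKW).
If there exist `d ≥ 2k` and a primitive string `Q` with `|Q| ≤ m/8d` and
`δ_H(P, Q^*) = d`, then the number of positions `i ∈ [1 .. n-m+1]` with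
`δ_H(T[i .. i+m-1], P) ≤ k` is at most `12·(n/m)·d`. -/
theorem kmismatch_occurrences_bound {α : Type*} (P T : ℕ → α) (m n k d : ℕ)
    (hm : 1 ≤ m) (hk : 1 ≤ k) (hkm : k ≤ m) (hd : 2 * k ≤ d)
    (Q : ℕ → α) (ℓ : ℕ) (hℓ : 1 ≤ ℓ) (hQlen : 8 * d * ℓ ≤ m)
    (hprim : Primitive Q ℓ) (hdist : hammingToPer P m Q ℓ = d) :
    (Set.ncard {i | 1 ≤ i ∧ i + m ≤ n + 1 ∧
        Set.ncard {t | 1 ≤ t ∧ t ≤ m ∧ T (i + t - 1) ≠ P t} ≤ k} : ℚ)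
      ≤ 12 * ((n : ℚ) / (m : ℚ)) * (d : ℚ) :=
  kmismatch_occurrences_bound_general P T m n k d hk hd Q ℓ hℓ hQlen hprim hdist
end
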